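/- Let Z ~ Exp(1), and let Y₁, Y₂ be independent Gamma(M,1) random variables, all mutually independent, and let α, β, δ₁, δ₂ > 0 with δ₁ ≠ δ₂. Define X = αZ/(1 + β(δ₁Y₁ + δ₂Y₂)). Then the cdf of X is F_X(x) = 1 - e^{-x/α} Σ_{j=1}^2 Σ_{i=0}^{M-1} a_i^{(j)} i! / ((β/α)x + 1/δ_j)^{i+1} for x ≥ 0, where a_i^{(1)} = (1/(δ₁^{i+1}(M-1)!)) (δ₁/(δ₁-δ₂))^M ((2(M-1)-i)!/(i!(M-1-i)!)) (δ₂/(δ₂-δ₁))^{M-1-i} and a_i^{(2)} is obtained by swapping δ₁ and δ₂. -/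

import Mathlib

open MeasureTheory ProbabilityTheory Real Set
open scoped ProbabilityTheory ENNReal

/-- The coefficient `a_i^{(1)}` (with `δ₁, δ₂` swapped it gives `a_i^{(2)}`). -/
noncomputable def coefA (M : ℕ) (δ₁ δ₂ : ℝ) (i : ℕ) : ℝ :=
  (1 / (δ₁ ^ (i + 1) * (Nat.factorial (M - 1) : ℝ))) * (δ₁ / (δ₁ - δ₂)) ^ M *
    ((Nat.factorial (2 * (M - 1) - i) : ℝ) /
      ((Nat.factorial i : ℝ) * (Nat.factorial (M - 1 - i) : ℝ))) *
    (δ₂ / (δ₂ - δ₁)) ^ (M - 1 - i)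

/-! Conditioning on `(Y₁, Y₂)`, the exponential tail of `Z` gives
`P(X ≤ x) = 1 - E[exp (-x (1 + β (δ₁ Y₁ + δ₂ Y₂)) / α)]`, and by independence this expectation is
`e^{-x/α}` times the product of the Laplace transforms `(1 + t δⱼ)^{-M}` of the two Gamma variables,
`t = β x / α`. The coefficients `a_i^{(j)}` are the partial fraction expansion of
`(1 + t δ₁)^{-M} (1 + t δ₂)^{-M}`, obtained from the recursion
`1 / (X^{m+1} Y^{n+1}) = (1 / (X^{m+1} Y^n) - 1 / (X^m Y^{n+1})) / (Y - X)`. -/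

/-- The principal part at `X = 0` of `1 / (X ^ a * (X + d) ^ (c + 1))`. -/
noncomputable def principalPart (a c : ℕ) (X d : ℝ) : ℝ :=
  ∑ k ∈ Finset.range a, (c + k).choose k * (-1) ^ k / (d ^ (c + 1 + k) * X ^ (a - k))

lemma principalPart_zero_left (c : ℕ) (X d : ℝ) : principalPart 0 c X d = 0 := rfl

lemma principalPart_succ_zero (a : ℕ) (X d : ℝ) :
    principalPart (a + 1) 0 X d = 1 / d * (1 / X ^ (a + 1) - principalPart a 0 X d) := by
  have hterm (k : ℕ) : ((0 + (k + 1)).choose (k + 1) : ℝ) * (-1) ^ (k + 1) /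
      (d ^ (0 + 1 + (k + 1)) * X ^ (a + 1 - (k + 1)))
      = -(1 / d * ((0 + k).choose k * (-1) ^ k / (d ^ (0 + 1 + k) * X ^ (a - k)))) := by
    simp only [zero_add, Nat.choose_self, Nat.add_sub_add_right, pow_succ]
    ring
  rw [principalPart, principalPart, Finset.sum_range_succ', Finset.sum_congr rfl fun k _ => hterm k,
    Finset.sum_neg_distrib, ← Finset.mul_sum]
  simp only [add_zero, Nat.choose_self, Nat.cast_one, pow_zero, Nat.sub_zero]
  ring

lemma principalPart_succ_succ (a c : ℕ) (X d : ℝ) :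
    principalPart (a + 1) (c + 1) X d
      = 1 / d * (principalPart (a + 1) c X d - principalPart a (c + 1) X d) := by
  have hterm (k : ℕ) : ((c + 1 + (k + 1)).choose (k + 1) : ℝ) * (-1) ^ (k + 1) /
      (d ^ (c + 1 + 1 + (k + 1)) * X ^ (a + 1 - (k + 1)))
      = 1 / d * ((c + (k + 1)).choose (k + 1) * (-1) ^ (k + 1) /
          (d ^ (c + 1 + (k + 1)) * X ^ (a + 1 - (k + 1))))
        - 1 / d * ((c + 1 + k).choose k * (-1) ^ k / (d ^ (c + 1 + 1 + k) * X ^ (a - k))) := by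
    rw [show c + 1 + (k + 1) = (c + k + 1) + 1 by omega, Nat.choose_succ_succ',
      show c + (k + 1) = c + k + 1 by omega, show c + 1 + k = c + k + 1 by omega,
      Nat.add_sub_add_right]
    push_cast
    ring
  rw [principalPart, principalPart, principalPart, Finset.sum_range_succ',
    Finset.sum_range_succ' _ a, Finset.sum_congr rfl fun k _ => hterm k, Finset.sum_sub_distrib,
    ← Finset.mul_sum, ← Finset.mul_sum]
  simp only [add_zero, Nat.choose_zero_right, Nat.cast_one, pow_zero, Nat.sub_zero, pow_succ]
  ring

theorem one_div_pow_mul_eq_principalPart_add (m : ℕ) {X d : ℝ} (hX : X ≠ 0) (hXd : X + d ≠ 0)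
    (hd : d ≠ 0) :
    1 / (X ^ (m + 1) * (X + d)) = principalPart (m + 1) 0 X d + principalPart 1 m (X + d) (-d) := by
  induction m with
  | zero =>
    simp only [principalPart, zero_add, add_zero, Finset.sum_range_one, Nat.choose_self,
      Nat.cast_one, pow_zero, pow_one, tsub_zero, one_mul]
    field_simp
    ring
  | succ m ih =>
    have hrec : 1 / (X ^ (m + 1 + 1) * (X + d))
        = 1 / d * (1 / X ^ (m + 1 + 1) - 1 / (X ^ (m + 1) * (X + d))) := by
      field_simp
      ring
    have hpp := principalPart_succ_succ 0 m (X + d) (-d)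
    rw [principalPart_zero_left, sub_zero] at hpp
    rw [hrec, ih, principalPart_succ_zero (m + 1), hpp]
    ring

theorem one_div_pow_mul_pow_eq_principalPart_add (m n : ℕ) {X d : ℝ} (hX : X ≠ 0)
    (hXd : X + d ≠ 0) (hd : d ≠ 0) :
    1 / (X ^ (m + 1) * (X + d) ^ (n + 1))
      = principalPart (m + 1) n X d + principalPart (n + 1) m (X + d) (-d) := by
  induction n generalizing m with
  | zero => simpa using one_div_pow_mul_eq_principalPart_add m hX hXd hd
  | succ n ihn =>
    induction m with
    | zero =>
      have h := one_div_pow_mul_eq_principalPart_add (n + 1) hXd (by simpa using hX)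
        (neg_ne_zero.2 hd)
      rw [add_neg_cancel_right, neg_neg] at h
      convert h using 1
      · ring
      · exact add_comm _ _
    | succ m ihm =>
      have hrec : 1 / (X ^ (m + 1 + 1) * (X + d) ^ (n + 1 + 1))
          = 1 / d * (1 / (X ^ (m + 1 + 1) * (X + d) ^ (n + 1))
            - 1 / (X ^ (m + 1) * (X + d) ^ (n + 1 + 1))) := by
        field_simp
        ring
      rw [hrec, ihn (m + 1), ihm, principalPart_succ_succ (m + 1) n,
        principalPart_succ_succ (n + 1) m]
      ring

lemma coefA_mul_factorial {δ₁ δ₂ : ℝ} (h₁ : δ₁ ≠ 0) (h₂ : δ₂ ≠ 0) (i j : ℕ) :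
    coefA (i + j + 1) δ₁ δ₂ i * i.factorial
      = (1 / (δ₁ * δ₂)) ^ (i + j + 1) *
        ((i + j + j).choose j * (-1) ^ j / (1 / δ₂ - 1 / δ₁) ^ (i + j + 1 + j)) := by
  have hinv : 1 / δ₂ - 1 / δ₁ = (δ₁ - δ₂) / (δ₁ * δ₂) := by field_simp
  rw [coefA, Nat.add_sub_cancel, show 2 * (i + j) - i = i + j + j by omega,
    show i + j - i = j by omega, Nat.cast_choose ℝ (by omega : j ≤ i + j + j),
    show i + j + j - j = i + j by omega, hinv, show δ₂ - δ₁ = -(δ₁ - δ₂) by ring, div_neg,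
    neg_pow]
  simp only [div_pow]
  field_simp
  ring

lemma sum_coefA_mul_factorial_div {δ₁ δ₂ : ℝ} (h₁ : δ₁ ≠ 0) (h₂ : δ₂ ≠ 0) (m : ℕ) (X : ℝ) :
    ∑ i ∈ Finset.range (m + 1), coefA (m + 1) δ₁ δ₂ i * i.factorial / X ^ (i + 1)
      = (1 / (δ₁ * δ₂)) ^ (m + 1) * principalPart (m + 1) m X (1 / δ₂ - 1 / δ₁) := by
  rw [principalPart, Finset.mul_sum, ← Finset.sum_range_reflect]
  refine Finset.sum_congr rfl fun i hi => ?_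
  obtain ⟨j, rfl⟩ : ∃ j, m = j + i := ⟨m - i, by grind⟩
  rw [show j + i + 1 - 1 - i = j by omega, show j + i + 1 - i = j + 1 by omega,
    coefA_mul_factorial h₁ h₂, mul_div_assoc, div_div]

theorem sum_coefA_add_sum_coefA {δ₁ δ₂ t : ℝ} (h₁ : δ₁ ≠ 0) (h₂ : δ₂ ≠ 0) (hne : δ₁ ≠ δ₂)
    (ht₁ : 1 + t * δ₁ ≠ 0) (ht₂ : 1 + t * δ₂ ≠ 0) (m : ℕ) :
    ∑ i ∈ Finset.range (m + 1), coefA (m + 1) δ₁ δ₂ i * i.factorial / (t + 1 / δ₁) ^ (i + 1)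
      + ∑ i ∈ Finset.range (m + 1), coefA (m + 1) δ₂ δ₁ i * i.factorial / (t + 1 / δ₂) ^ (i + 1)
      = (1 / (1 + t * δ₁)) ^ (m + 1) * (1 / (1 + t * δ₂)) ^ (m + 1) := by
  have hX₁ : t + 1 / δ₁ = (1 + t * δ₁) / δ₁ := by field_simp; ring
  have hX₂ : t + 1 / δ₂ = (1 + t * δ₂) / δ₂ := by field_simp; ring
  have hX₂' : t + 1 / δ₂ = (t + 1 / δ₁) + (1 / δ₂ - 1 / δ₁) := by ring
  have hd : 1 / δ₂ - 1 / δ₁ ≠ 0 := by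
    rw [sub_ne_zero, one_div, one_div, ne_eq, inv_inj]
    exact hne.symm
  have hpf := one_div_pow_mul_pow_eq_principalPart_add m m (X := t + 1 / δ₁)
    (d := 1 / δ₂ - 1 / δ₁) (by rw [hX₁]; exact div_ne_zero ht₁ h₁)
    (by rw [← hX₂', hX₂]; exact div_ne_zero ht₂ h₂) hd
  rw [sum_coefA_mul_factorial_div h₁ h₂, sum_coefA_mul_factorial_div h₂ h₁,
    mul_comm δ₂ δ₁, ← mul_add, ← neg_sub (1 / δ₂), hX₂', ← hpf, ← hX₂', hX₁, hX₂]
  simp only [div_pow, one_pow, mul_pow]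
  field_simp

lemma expMeasure_one_eq :
    expMeasure 1 = volume.withDensity fun y => ENNReal.ofReal (if 0 ≤ y then exp (-y) else 0) := by
  rw [expMeasure, gammaMeasure]
  congr with y
  simp [gammaPDF_eq]

lemma gammaMeasure_natCast_add_one_one (n : ℕ) :
    gammaMeasure (n + 1) 1 = volume.withDensity fun y =>
      ENNReal.ofReal (if 0 ≤ y then y ^ n * exp (-y) / n.factorial else 0) := by
  rw [gammaMeasure]
  congr with y
  rw [gammaPDF_eq, Real.Gamma_nat_eq_factorial, add_sub_cancel_right, rpow_natCast]
  congr 2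
  simp only [one_rpow, mul_one, one_mul, div_eq_inv_mul]
  ring

lemma expMeasure_Iic {r x : ℝ} (hr : 0 < r) (hx : 0 ≤ x) :
    expMeasure r (Iic x) = ENNReal.ofReal (1 - exp (-(r * x))) := by
  have := isProbabilityMeasure_expMeasure hr
  rw [← ofReal_cdf, cdf_expMeasure_eq hr, if_pos hx]

lemma gammaPDF_mul_exp_neg_mul {a r c : ℝ} (hr : 0 ≤ r) (hrc : 0 < r + c) (y : ℝ) :
    gammaPDF a r y * ENNReal.ofReal (exp (-(c * y)))
      = ENNReal.ofReal ((r / (r + c)) ^ a) * gammaPDF a (r + c) y := by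
  rcases lt_or_ge y 0 with hy | hy
  · simp [gammaPDF_of_neg hy]
  rw [gammaPDF_of_nonneg hy, gammaPDF_of_nonneg hy, ← ENNReal.ofReal_mul' (exp_nonneg _),
    ← ENNReal.ofReal_mul (by positivity), div_rpow hr hrc.le]
  congr 1
  rw [show -((r + c) * y) = -(r * y) + -(c * y) by ring, exp_add]
  field_simp

lemma lintegral_gammaPDF_mul_exp_neg_mul {a r c : ℝ} (ha : 0 < a) (hr : 0 ≤ r)
    (hrc : 0 < r + c) :
    ∫⁻ y, gammaPDF a r y * ENNReal.ofReal (exp (-(c * y))) = ENNReal.ofReal ((r / (r + c)) ^ a) := by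
  simp_rw [gammaPDF_mul_exp_neg_mul hr hrc]
  rw [lintegral_const_mul' _ _ ENNReal.ofReal_ne_top, lintegral_gammaPDF_eq_one ha hrc, mul_one]

section RandomVariables

variable {Ω : Type*} [MeasurableSpace Ω] {P : Measure Ω}

lemma aemeasurable_of_map_eq_gammaMeasure {Y : Ω → ℝ} {a r : ℝ} (ha : 0 < a) (hr : 0 < r)
    (hY : P.map Y = gammaMeasure a r) : AEMeasurable Y P :=
  have := isProbabilityMeasure_gammaMeasure ha hr
  .of_map_ne_zero (hY ▸ IsProbabilityMeasure.ne_zero _)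

lemma ae_nonneg_of_map_eq_gammaMeasure {Y : Ω → ℝ} {a r : ℝ} (ha : 0 < a) (hr : 0 < r)
    (hY : P.map Y = gammaMeasure a r) : ∀ᵐ ω ∂P, 0 ≤ Y ω := by
  refine ae_of_ae_map (aemeasurable_of_map_eq_gammaMeasure ha hr hY) ?_
  rw [hY, ae_iff, show {y : ℝ | ¬0 ≤ y} = Iio 0 by ext; simp, gammaMeasure,
    withDensity_apply _ measurableSet_Iio]
  exact lintegral_gammaPDF_of_nonpos le_rfl

theorem lintegral_exp_neg_mul_of_map_eq_gammaMeasure {Y : Ω → ℝ} {a r c : ℝ} (ha : 0 < a)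
    (hr : 0 < r) (hrc : 0 < r + c) (hY : P.map Y = gammaMeasure a r) :
    ∫⁻ ω, ENNReal.ofReal (exp (-(c * Y ω))) ∂P = ENNReal.ofReal ((r / (r + c)) ^ a) := by
  have hf : Measurable fun y : ℝ => ENNReal.ofReal (exp (-(c * y))) := by fun_prop
  have hpdf : Measurable (gammaPDF a r) := (measurable_gammaPDFReal a r).ennreal_ofReal
  rw [← lintegral_map' hf.aemeasurable (aemeasurable_of_map_eq_gammaMeasure ha hr hY), hY,
    gammaMeasure, lintegral_withDensity_eq_lintegral_mul _ hpdf hf]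
  exact lintegral_gammaPDF_mul_exp_neg_mul ha hr.le hrc

theorem lintegral_exp_neg_mul_add_mul_of_indepFun {Y₁ Y₂ : Ω → ℝ} {a₁ a₂ r₁ r₂ c₁ c₂ : ℝ}
    (ha₁ : 0 < a₁) (ha₂ : 0 < a₂) (hr₁ : 0 < r₁) (hr₂ : 0 < r₂) (hrc₁ : 0 < r₁ + c₁)
    (hrc₂ : 0 < r₂ + c₂) (hY : IndepFun Y₁ Y₂ P) (hY₁ : P.map Y₁ = gammaMeasure a₁ r₁)
    (hY₂ : P.map Y₂ = gammaMeasure a₂ r₂) :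
    ∫⁻ ω, ENNReal.ofReal (exp (-(c₁ * Y₁ ω + c₂ * Y₂ ω))) ∂P
      = ENNReal.ofReal ((r₁ / (r₁ + c₁)) ^ a₁ * (r₂ / (r₂ + c₂)) ^ a₂) := by
  have hf (c : ℝ) : Measurable fun y : ℝ => ENNReal.ofReal (exp (-(c * y))) := by fun_prop
  simp_rw [neg_add, exp_add, ENNReal.ofReal_mul (exp_nonneg _)]
  rw [lintegral_mul_eq_lintegral_mul_lintegral_of_indepFun''
      (f := fun ω => ENNReal.ofReal (exp (-(c₁ * Y₁ ω))))
      (g := fun ω => ENNReal.ofReal (exp (-(c₂ * Y₂ ω))))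
      ((hf c₁).comp_aemeasurable (aemeasurable_of_map_eq_gammaMeasure ha₁ hr₁ hY₁))
      ((hf c₂).comp_aemeasurable (aemeasurable_of_map_eq_gammaMeasure ha₂ hr₂ hY₂))
      (hY.comp (hf c₁) (hf c₂)),
    lintegral_exp_neg_mul_of_map_eq_gammaMeasure ha₁ hr₁ hrc₁ hY₁,
    lintegral_exp_neg_mul_of_map_eq_gammaMeasure ha₂ hr₂ hrc₂ hY₂,
    ENNReal.ofReal_mul (by positivity)]

theorem measure_le_comp_of_indepFun_of_map_eq_expMeasure {E : Type*} [MeasurableSpace E]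
    [IsProbabilityMeasure P] {W : Ω → E} {Z : Ω → ℝ} {g : E → ℝ} {r : ℝ} (hr : 0 < r)
    (hW : AEMeasurable W P) (hZ : P.map Z = expMeasure r) (hWZ : IndepFun W Z P)
    (hg : Measurable g) (hg₀ : ∀ᵐ ω ∂P, 0 ≤ g (W ω)) :
    P {ω | Z ω ≤ g (W ω)} = 1 - ∫⁻ ω, ENNReal.ofReal (exp (-(r * g (W ω)))) ∂P := by
  have := isProbabilityMeasure_expMeasure hr
  have hZm : AEMeasurable Z P := aemeasurable_of_map_eq_gammaMeasure one_pos hr hZ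
  have hS : MeasurableSet {p : E × ℝ | p.2 ≤ g p.1} :=
    measurableSet_le measurable_snd (hg.comp measurable_fst)
  have hexp : AEMeasurable (fun ω => ENNReal.ofReal (exp (-(r * g (W ω))))) P :=
    (by fun_prop : Measurable fun w => ENNReal.ofReal (exp (-(r * g w)))).comp_aemeasurable hW
  have hle : ∀ᵐ ω ∂P, ENNReal.ofReal (exp (-(r * g (W ω)))) ≤ 1 :=
    hg₀.mono fun ω hω => ENNReal.ofReal_le_one.2 (exp_le_one_iff.2 (by nlinarith))
  have hfin := (lintegral_mono_ae hle).trans_lt (by simp : ∫⁻ _, (1 : ℝ≥0∞) ∂P < ⊤)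
  calc P {ω | Z ω ≤ g (W ω)}
      = P.map (fun ω => (W ω, Z ω)) {p | p.2 ≤ g p.1} := by
        rw [Measure.map_apply_of_aemeasurable (hW.prodMk hZm) hS]; rfl
    _ = ∫⁻ w, expMeasure r (Prod.mk w ⁻¹' {p | p.2 ≤ g p.1}) ∂(P.map W) := by
        rw [(indepFun_iff_map_prod_eq_prod_map_map hW hZm).1 hWZ, hZ, Measure.prod_apply hS]
    _ = ∫⁻ ω, expMeasure r (Iic (g (W ω))) ∂P :=
        lintegral_map' (measurable_measure_prodMk_left hS).aemeasurable hW
    _ = ∫⁻ ω, 1 - ENNReal.ofReal (exp (-(r * g (W ω)))) ∂P := by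
        refine lintegral_congr_ae (hg₀.mono fun ω hω => ?_)
        dsimp only
        rw [expMeasure_Iic hr hω, ENNReal.ofReal_sub _ (exp_nonneg _), ENNReal.ofReal_one]
    _ = 1 - ∫⁻ ω, ENNReal.ofReal (exp (-(r * g (W ω)))) ∂P := by
        rw [lintegral_sub' hexp hfin.ne hle, lintegral_one, measure_univ]

theorem measure_mul_div_one_add_le_of_iIndepFun [IsProbabilityMeasure P] {Z Y₁ Y₂ : Ω → ℝ}
    {a α β δ₁ δ₂ x : ℝ} (ha : 0 < a) (hα : 0 < α) (hβ : 0 ≤ β) (hδ₁ : 0 ≤ δ₁) (hδ₂ : 0 ≤ δ₂)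
    (hx : 0 ≤ x) (hZ : P.map Z = expMeasure 1) (hY₁ : P.map Y₁ = gammaMeasure a 1)
    (hY₂ : P.map Y₂ = gammaMeasure a 1) (hIndep : iIndepFun ![Z, Y₁, Y₂] P) :
    P {ω | α * Z ω / (1 + β * (δ₁ * Y₁ ω + δ₂ * Y₂ ω)) ≤ x}
      = ENNReal.ofReal (1 - exp (-x / α) *
          ((1 / (1 + β / α * x * δ₁)) ^ a * (1 / (1 + β / α * x * δ₂)) ^ a)) := by
  have hmeas (i : Fin 3) : AEMeasurable (![Z, Y₁, Y₂] i) P := by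
    fin_cases i
    · exact aemeasurable_of_map_eq_gammaMeasure one_pos one_pos hZ
    · exact aemeasurable_of_map_eq_gammaMeasure ha one_pos hY₁
    · exact aemeasurable_of_map_eq_gammaMeasure ha one_pos hY₂
  have hW : AEMeasurable (fun ω => (Y₁ ω, Y₂ ω)) P := (hmeas 1).prodMk (hmeas 2)
  have hWZ : IndepFun (fun ω => (Y₁ ω, Y₂ ω)) Z P :=
    hIndep.indepFun_prodMk₀ hmeas 1 2 0 (by decide) (by decide)
  have hY₁₂ : IndepFun Y₁ Y₂ P := hIndep.indepFun (by decide : (1 : Fin 3) ≠ 2)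
  set t := β / α * x
  have hY₀ := (ae_nonneg_of_map_eq_gammaMeasure ha one_pos hY₁).and
    (ae_nonneg_of_map_eq_gammaMeasure ha one_pos hY₂)
  let g : ℝ × ℝ → ℝ := fun w => x / α + (t * δ₁ * w.1 + t * δ₂ * w.2)
  have hevent : {ω | α * Z ω / (1 + β * (δ₁ * Y₁ ω + δ₂ * Y₂ ω)) ≤ x}
      =ᵐ[P] {ω | Z ω ≤ g (Y₁ ω, Y₂ ω)} := by
    refine Filter.eventuallyEq_set.2 (hY₀.mono fun ω ⟨h₁, h₂⟩ => ?_)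
    have hD : 0 < 1 + β * (δ₁ * Y₁ ω + δ₂ * Y₂ ω) := by positivity
    have hg : g (Y₁ ω, Y₂ ω) = x * (1 + β * (δ₁ * Y₁ ω + δ₂ * Y₂ ω)) / α := by
      simp only [g, t]; field_simp
    rw [mem_ofPred_eq, mem_ofPred_eq, div_le_iff₀ hD, hg, le_div_iff₀' hα]
  have hexp (ω : Ω) : exp (-(1 * g (Y₁ ω, Y₂ ω)))
      = exp (-x / α) * exp (-(t * δ₁ * Y₁ ω + t * δ₂ * Y₂ ω)) := by
    rw [one_mul, neg_add, exp_add, neg_div]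
  rw [measure_congr hevent, measure_le_comp_of_indepFun_of_map_eq_expMeasure one_pos hW hZ
      hWZ (by fun_prop) (hY₀.mono fun ω ⟨h₁, h₂⟩ => by positivity)]
  simp_rw [hexp, ENNReal.ofReal_mul (exp_nonneg _)]
  rw [lintegral_const_mul' _ _ ENNReal.ofReal_ne_top,
    lintegral_exp_neg_mul_add_mul_of_indepFun ha ha one_pos one_pos (by positivity)
      (by positivity) hY₁₂ hY₁ hY₂,
    ← ENNReal.ofReal_mul (exp_nonneg _), ← ENNReal.ofReal_one,
    ← ENNReal.ofReal_sub _ (by positivity)]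

end RandomVariables

/-- Cdf of the approximate ZF SINR `X = αZ/(1 + β(δ₁Y₁ + δ₂Y₂))` with `Z ~ Exp(1)`,
`Y₁, Y₂ ~ Gamma(M,1)` mutually independent. -/
theorem cdf_zf_sinr_approx
    {Ω : Type*} [MeasureSpace Ω] [IsProbabilityMeasure (ℙ : Measure Ω)]
    (M : ℕ) (hM : 1 ≤ M) (α β δ₁ δ₂ : ℝ)
    (hα : 0 < α) (hβ : 0 < β) (hδ₁ : 0 < δ₁) (hδ₂ : 0 < δ₂) (hne : δ₁ ≠ δ₂)
    (Z Y₁ Y₂ : Ω → ℝ)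
    (hZ : Measure.map Z ℙ = volume.withDensity (fun y =>
        ENNReal.ofReal (if 0 ≤ y then Real.exp (-y) else 0)))
    (hY₁ : Measure.map Y₁ ℙ = volume.withDensity (fun y =>
        ENNReal.ofReal (if 0 ≤ y then y ^ (M - 1) * Real.exp (-y) / (Nat.factorial (M - 1)) else 0)))
    (hY₂ : Measure.map Y₂ ℙ = volume.withDensity (fun y =>
        ENNReal.ofReal (if 0 ≤ y then y ^ (M - 1) * Real.exp (-y) / (Nat.factorial (M - 1)) else 0)))
    (hIndep : iIndepFun (m := fun _ => Real.measurableSpace) ![Z, Y₁, Y₂] ℙ) :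
    ∀ x : ℝ, 0 ≤ x →
      ℙ {ω | α * Z ω / (1 + β * (δ₁ * Y₁ ω + δ₂ * Y₂ ω)) ≤ x}
        = ENNReal.ofReal (1 - Real.exp (-x / α) *
            ((∑ i ∈ Finset.range M,
                coefA M δ₁ δ₂ i * (Nat.factorial i : ℝ) / ((β / α) * x + 1 / δ₁) ^ (i + 1))
             + ∑ i ∈ Finset.range M,
                coefA M δ₂ δ₁ i * (Nat.factorial i : ℝ) / ((β / α) * x + 1 / δ₂) ^ (i + 1))) := by
  intro x hx
  obtain ⟨m, rfl⟩ : ∃ m, M = m + 1 := ⟨M - 1, by omega⟩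
  rw [Nat.add_sub_cancel, ← gammaMeasure_natCast_add_one_one] at hY₁ hY₂
  rw [measure_mul_div_one_add_le_of_iIndepFun (by positivity) hα hβ.le hδ₁.le hδ₂.le hx
      (expMeasure_one_eq ▸ hZ) hY₁ hY₂ hIndep, ← Nat.cast_add_one, rpow_natCast, rpow_natCast,
    sum_coefA_add_sum_coefA hδ₁.ne' hδ₂.ne' hne (by positivity) (by positivity)]
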